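/- arXiv:2010.07012 — 3 statements merged into one kernel-verified Lean document; each statement's English description precedes it below -/
import Mathlib

section
/- Let ρ ∈ C^K be M-sparse with ‖ρ‖_∞ ≤ 1 and let a_1,…,a_K ∈ C^N be unit vectors with |⟨a_k, a_l⟩| ≤ Δ/√N for k ≠ l. Define e = Σ_{k≠l} conj(ρ_k) ρ_l (conj(a_k) ⊗ a_l) ∈ C^{N²} and χ_k = |ρ_k|². If M ≤ α√N, then ‖e‖_2 ≤ (1 + Δα) ‖χ‖_1, where ‖χ‖_1 = Σ_k |ρ_k|². -/
/-!
Write `e = ∑_{k ≠ l} conj ρ_k ρ_l x_{kl}` with `x_{kl} = conj a_k ⊗ a_l` (`conjKron`). Expanding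
`‖e‖²` and bounding termwise, `|⟨x_{kl}, x_{mn}⟩| = |⟨a_k, a_m⟩| |⟨a_l, a_n⟩|`; after enlarging the
sum to all pairs of pairs it factorizes as `(∑_{k,m} |ρ_k| |ρ_m| |⟨a_k, a_m⟩|)²`. In that sum the
diagonal gives `‖ρ‖₂²` and coherence bounds the rest by `(Δ/√N) ‖ρ‖₁²`, while Cauchy–Schwarz on the
support of `ρ` gives `‖ρ‖₁² ≤ M ‖ρ‖₂² ≤ α √N ‖ρ‖₂²`.
-/

open Finset
open scoped InnerProductSpace ComplexConjugate

theorem norm_sum_smul_sq_le {𝕜 E ι : Type*} [RCLike 𝕜] [SeminormedAddCommGroup E]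
    [InnerProductSpace 𝕜 E] (s : Finset ι) (c : ι → 𝕜) (x : ι → E) :
    ‖∑ i ∈ s, c i • x i‖ ^ 2 ≤ ∑ i ∈ s, ∑ j ∈ s, ‖c i‖ * ‖c j‖ * ‖⟪x i, x j⟫_𝕜‖ := by
  rw [norm_sq_eq_re_inner (𝕜 := 𝕜), sum_inner]
  simp only [inner_sum, inner_smul_left, inner_smul_right]
  refine (RCLike.re_le_norm _).trans <|
    (norm_sum_le _ _).trans (sum_le_sum fun i _ => ?_)
  refine (norm_sum_le _ _).trans_eq (sum_congr rfl fun j _ => ?_)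
  simp only [norm_mul, RCLike.norm_conj]
  ring

theorem sum_sum_mul_le_sq_sum_sum {ι : Type*} [Fintype ι] (F : ι → ι → ℝ)
    (hF : ∀ k m, 0 ≤ F k m) (s : Finset (ι × ι)) :
    ∑ q ∈ s, ∑ q' ∈ s, F q.1 q'.1 * F q.2 q'.2 ≤ (∑ k, ∑ m, F k m) ^ 2 := by
  have hnonneg : ∀ q q' : ι × ι, 0 ≤ F q.1 q'.1 * F q.2 q'.2 :=
    fun q q' => mul_nonneg (hF _ _) (hF _ _)
  calc ∑ q ∈ s, ∑ q' ∈ s, F q.1 q'.1 * F q.2 q'.2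
      ≤ ∑ q ∈ s, ∑ q' : ι × ι, F q.1 q'.1 * F q.2 q'.2 :=
        sum_le_sum fun q _ => sum_le_univ_sum_of_nonneg fun q' => hnonneg q q'
    _ ≤ ∑ q : ι × ι, ∑ q' : ι × ι, F q.1 q'.1 * F q.2 q'.2 :=
        sum_le_univ_sum_of_nonneg fun q => sum_nonneg fun q' _ => hnonneg q q'
    _ = (∑ k, ∑ m, F k m) ^ 2 := by
        rw [sq, sum_mul_sum, Fintype.sum_prod_type]
        simp_rw [sum_mul_sum, Fintype.sum_prod_type]

def conjKron {m n : Type*} (u : m → ℂ) (v : n → ℂ) : EuclideanSpace ℂ (m × n) :=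
  WithLp.toLp 2 fun p => conj (u p.1) * v p.2

theorem inner_conjKron {m n : Type*} [Fintype m] [Fintype n] (u u' : m → ℂ) (v v' : n → ℂ) :
    ⟪conjKron u v, conjKron u' v'⟫_ℂ = conj (∑ i, conj (u i) * u' i) * ∑ j, conj (v j) * v' j := by
  simp only [conjKron, PiLp.inner_apply, RCLike.inner_apply, map_sum, map_mul, Complex.conj_conj,
    sum_mul_sum, Fintype.sum_prod_type]
  exact sum_congr rfl fun i _ => sum_congr rfl fun j _ => by ring

theorem norm_inner_conjKron {m n : Type*} [Fintype m] [Fintype n] (u u' : m → ℂ) (v v' : n → ℂ) :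
    ‖⟪conjKron u v, conjKron u' v'⟫_ℂ‖ = ‖∑ i, conj (u i) * u' i‖ * ‖∑ j, conj (v j) * v' j‖ := by
  rw [inner_conjKron, norm_mul, Complex.norm_conj]

theorem norm_sum_conjKron_le {ι n : Type*} [Fintype ι] [Fintype n] (ρ : ι → ℂ) (a : ι → n → ℂ)
    (s : Finset (ι × ι)) :
    ‖∑ q ∈ s, (conj (ρ q.1) * ρ q.2) • conjKron (a q.1) (a q.2)‖
      ≤ ∑ k, ∑ m, ‖ρ k‖ * ‖ρ m‖ * ‖∑ i, conj (a k i) * a m i‖ := by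
  refine le_of_sq_le_sq ((norm_sum_smul_sq_le _ _ _).trans ?_)
    (sum_nonneg fun k _ => sum_nonneg fun m _ => by positivity)
  refine le_of_eq_of_le (sum_congr rfl fun q _ => sum_congr rfl fun q' _ => ?_)
    (sum_sum_mul_le_sq_sum_sum _ (fun k m => by positivity) s)
  rw [norm_inner_conjKron]
  simp only [norm_mul, Complex.norm_conj]
  ring

theorem sum_sum_mul_mul_le_sum_sq_add {ι : Type*} [Fintype ι] (r : ι → ℝ) (hr : ∀ k, 0 ≤ r k)
    (G : ι → ι → ℝ) {μ : ℝ} (hμ : 0 ≤ μ) (hdiag : ∀ k, G k k ≤ 1)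
    (hoff : ∀ k m, k ≠ m → G k m ≤ μ) :
    ∑ k, ∑ m, r k * r m * G k m ≤ ∑ k, r k ^ 2 + μ * (∑ k, r k) ^ 2 := by
  classical
  have hG : ∀ k m, G k m ≤ (if k = m then 1 else 0) + μ := by
    intro k m
    split_ifs with h
    · subst h; linarith [hdiag k]
    · simpa using hoff k m h
  calc ∑ k, ∑ m, r k * r m * G k m
      ≤ ∑ k, ∑ m, r k * r m * ((if k = m then 1 else 0) + μ) :=
        sum_le_sum fun k _ => sum_le_sum fun m _ =>
          mul_le_mul_of_nonneg_left (hG k m) (mul_nonneg (hr k) (hr m))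
    _ = ∑ k, r k ^ 2 + μ * (∑ k, r k) ^ 2 := by
        simp only [mul_add, mul_ite, mul_one, mul_zero, sum_add_distrib, sum_ite_eq, mem_univ,
          if_true, ← sq]
        rw [sq, sum_mul_sum, mul_sum]
        exact congrArg _ <| sum_congr rfl fun k _ => by
          rw [mul_sum]
          exact sum_congr rfl fun m _ => by ring

theorem sq_sum_norm_le_card_support_mul {ι E : Type*} [Fintype ι] [NormedAddCommGroup E]
    [DecidableEq E] (ρ : ι → E) :
    (∑ k, ‖ρ k‖) ^ 2 ≤ #(univ.filter fun k => ρ k ≠ 0) * ∑ k, ‖ρ k‖ ^ 2 := by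
  have hsupp : ∀ f : ι → ℝ, (∀ k, ρ k = 0 → f k = 0) →
      ∑ k ∈ univ.filter (fun k => ρ k ≠ 0), f k = ∑ k, f k := fun f hf =>
    sum_filter_of_ne fun k _ h => fun h0 => h (hf k h0)
  rw [← hsupp _ fun k h => by simp [h], ← hsupp _ fun k h => by simp [h]]
  exact sq_sum_le_card_mul_sum_sq

theorem stmt11_general (N K M : ℕ) (hN : 0 < N) (Δ α : ℝ) (hΔ : 0 < Δ)
    (ρ : Fin K → ℂ)
    (hsparse : (Finset.univ.filter (fun k => ρ k ≠ 0)).card ≤ M)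
    (a : Fin K → Fin N → ℂ)
    (hunit : ∀ k, ∑ i : Fin N, ‖a k i‖ ^ 2 = 1)
    (hcoh : ∀ k l : Fin K, k ≠ l →
      ‖∑ i : Fin N, (starRingEnd ℂ) (a k i) * a l i‖ ≤ Δ / Real.sqrt N)
    (hM : (M : ℝ) ≤ α * Real.sqrt N) :
    Real.sqrt (∑ p : Fin N × Fin N,
        ‖∑ k : Fin K, ∑ l ∈ Finset.univ.filter (fun l => l ≠ k),
            (starRingEnd ℂ) (ρ k) * ρ l * ((starRingEnd ℂ) (a k p.1) * a l p.2)‖ ^ 2)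
      ≤ (1 + Δ * α) * ∑ k : Fin K, ‖ρ k‖ ^ 2 := by
  have hsqrtN : 0 < Real.sqrt N := Real.sqrt_pos.2 (Nat.cast_pos.2 hN)
  have hdiag : ∀ k, ‖∑ i, conj (a k i) * a k i‖ = 1 := by
    intro k
    simp only [Complex.conj_mul', ← Complex.ofReal_pow, ← Complex.ofReal_sum, hunit,
      Complex.ofReal_one, norm_one]
  have hμM : Δ / Real.sqrt N * M ≤ Δ * α := calc
    Δ / Real.sqrt N * M ≤ Δ / Real.sqrt N * (α * Real.sqrt N) := by gcongr
    _ = Δ * α := by field_simp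
  have hsupp : Δ / Real.sqrt N * (∑ k, ‖ρ k‖) ^ 2 ≤ Δ * α * ∑ k, ‖ρ k‖ ^ 2 := calc
    Δ / Real.sqrt N * (∑ k, ‖ρ k‖) ^ 2 ≤ Δ / Real.sqrt N * (M * ∑ k, ‖ρ k‖ ^ 2) := by
      gcongr
      exact (sq_sum_norm_le_card_support_mul ρ).trans <|
        mul_le_mul_of_nonneg_right (by exact_mod_cast hsparse) (by positivity)
    _ ≤ Δ * α * ∑ k, ‖ρ k‖ ^ 2 := by
      rw [← mul_assoc]; exact mul_le_mul_of_nonneg_right hμM (by positivity)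
  calc _ = ‖∑ q ∈ univ.filter (fun q : Fin K × Fin K => q.2 ≠ q.1),
          (conj (ρ q.1) * ρ q.2) • conjKron (a q.1) (a q.2)‖ := by
        simp only [EuclideanSpace.norm_eq, WithLp.ofLp_sum, WithLp.ofLp_smul, Finset.sum_apply,
          Pi.smul_apply, smul_eq_mul, conjKron]
        simp only [sum_filter, Fintype.sum_prod_type]
    _ ≤ ∑ k, ∑ m, ‖ρ k‖ * ‖ρ m‖ * ‖∑ i, conj (a k i) * a m i‖ := norm_sum_conjKron_le ρ a _
    _ ≤ ∑ k, ‖ρ k‖ ^ 2 + Δ / Real.sqrt N * (∑ k, ‖ρ k‖) ^ 2 :=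
        sum_sum_mul_mul_le_sum_sq_add _ (fun k => norm_nonneg _) _ (by positivity)
          (fun k => (hdiag k).le) hcoh
    _ ≤ (1 + Δ * α) * ∑ k, ‖ρ k‖ ^ 2 := by linarith

/-- If ρ is M-sparse with ‖ρ‖_∞ ≤ 1, the a_k are unit vectors with coherence
|⟨a_k,a_l⟩| ≤ Δ/√N for k ≠ l, and M ≤ α√N, then the off-diagonal vector
e = Σ_{k≠l} conj(ρ_k) ρ_l (conj(a_k) ⊗ a_l) satisfies ‖e‖₂ ≤ (1 + Δα)‖χ‖₁,
where ‖χ‖₁ = Σ_k |ρ_k|². -/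
theorem stmt11 (N K M : ℕ) (hN : 0 < N) (Δ α : ℝ) (hΔ : 0 < Δ) (hα : 0 < α)
    (ρ : Fin K → ℂ)
    (hsparse : (Finset.univ.filter (fun k => ρ k ≠ 0)).card ≤ M)
    (hρinf : ∀ k, ‖ρ k‖ ≤ 1)
    (a : Fin K → Fin N → ℂ)
    (hunit : ∀ k, ∑ i : Fin N, ‖a k i‖ ^ 2 = 1)
    (hcoh : ∀ k l : Fin K, k ≠ l →
      ‖∑ i : Fin N, (starRingEnd ℂ) (a k i) * a l i‖ ≤ Δ / Real.sqrt N)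
    (hM : (M : ℝ) ≤ α * Real.sqrt N) :
    Real.sqrt (∑ p : Fin N × Fin N,
        ‖∑ k : Fin K, ∑ l ∈ Finset.univ.filter (fun l => l ≠ k),
            (starRingEnd ℂ) (ρ k) * ρ l * ((starRingEnd ℂ) (a k p.1) * a l p.2)‖ ^ 2)
      ≤ (1 + Δ * α) * ∑ k : Fin K, ‖ρ k‖ ^ 2 :=
  stmt11_general N K M hN Δ α hΔ ρ hsparse a hunit hcoh hM
end

section
/- Under the same assumptions (ρ M-sparse, ‖ρ‖_∞ ≤ 1, unit columns a_k with coherence |⟨a_k,a_l⟩| ≤ Δ/√N for k≠l, e = Σ_{k≠l} conj(ρ_k)ρ_l (conj(a_k)⊗a_l)), for any index m with ρ_m = 0 (m not in the support), setting t_m = conj(a_m) ⊗ a_m, one has |⟨t_m, e⟩| ≤ Δ² M² / N. -/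
/-!
Write `⟨u, v⟩ = ∑ i, conj (u i) * v i`. Pairing the rank-one tensor `conj a_m ⊗ a_m` with
`conj a_k ⊗ a_l` gives `conj ⟨a_m, a_k⟩ * ⟨a_m, a_l⟩`, so with `z k = ρ k * ⟨a_m, a_k⟩` the quantity
is `∑_{k ≠ l} conj (z k) * z l`, of norm at most `(∑ k, ‖z k‖)²`. Since `ρ m = 0`, every nonzero
`z k` has `k ≠ m`, hence `‖z k‖ ≤ Δ / √N` by coherence, and there are at most `M` of them.
-/

open Finset

section Pairing

variable {R ι κ : Type*} [CommSemiring R] [StarRing R] [Fintype ι]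

theorem sum_prod_conj_tensor_mul_tensor (u v x y : ι → R) :
    ∑ p : ι × ι, starRingEnd R (starRingEnd R (u p.1) * v p.2) * (starRingEnd R (x p.1) * y p.2)
      = starRingEnd R (∑ i, starRingEnd R (u i) * x i) * ∑ j, starRingEnd R (v j) * y j := by
  simp only [map_sum, map_mul, starRingEnd_self_apply]
  rw [Fintype.sum_prod_type, Finset.sum_mul_sum]
  exact Finset.sum_congr rfl fun _ _ => Finset.sum_congr rfl fun _ _ => by ring

theorem sum_prod_conj_tensor_mul_sum_tensor [Fintype κ] (u : ι → R) (a : κ → ι → R)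
    (w : κ → κ → R) (s : κ → Finset κ) :
    ∑ p : ι × ι, starRingEnd R (starRingEnd R (u p.1) * u p.2)
        * ∑ k, ∑ l ∈ s k, w k l * (starRingEnd R (a k p.1) * a l p.2)
      = ∑ k, ∑ l ∈ s k, w k l * (starRingEnd R (∑ i, starRingEnd R (u i) * a k i)
          * ∑ j, starRingEnd R (u j) * a l j) := by
  conv_lhs => simp only [Finset.mul_sum]
  rw [Finset.sum_comm]
  refine Finset.sum_congr rfl fun k _ => ?_
  rw [Finset.sum_comm]
  refine Finset.sum_congr rfl fun l _ => ?_
  rw [← sum_prod_conj_tensor_mul_tensor, Finset.mul_sum]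
  exact Finset.sum_congr rfl fun _ _ => by ring

end Pairing

theorem norm_sum_offDiag_conj_mul_le {𝕜 ι : Type*} [RCLike 𝕜] [Fintype ι] [DecidableEq ι]
    (z : ι → 𝕜) :
    ‖∑ k, ∑ l ∈ univ.filter (fun l => l ≠ k), starRingEnd 𝕜 (z k) * z l‖ ≤ (∑ k, ‖z k‖) ^ 2 :=
  calc ‖∑ k, ∑ l ∈ univ.filter (fun l => l ≠ k), starRingEnd 𝕜 (z k) * z l‖
      ≤ ∑ k, ∑ l ∈ univ.filter (fun l => l ≠ k), ‖z k‖ * ‖z l‖ := by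
        refine (norm_sum_le _ _).trans (Finset.sum_le_sum fun k _ => ?_)
        refine (norm_sum_le _ _).trans_eq (Finset.sum_congr rfl fun l _ => ?_)
        rw [norm_mul, RCLike.norm_conj]
    _ ≤ ∑ k, ∑ l, ‖z k‖ * ‖z l‖ :=
        Finset.sum_le_sum fun k _ => Finset.sum_le_sum_of_subset_of_nonneg
          (Finset.filter_subset _ _) fun _ _ _ => by positivity
    _ = (∑ k, ‖z k‖) ^ 2 := by rw [sq, Finset.sum_mul_sum]

theorem sum_norm_le_card_support_mul {ι E : Type*} [Fintype ι] [NormedAddCommGroup E]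
    [DecidableEq E] (z : ι → E) (δ : ℝ) (hz : ∀ k, z k ≠ 0 → ‖z k‖ ≤ δ) :
    ∑ k, ‖z k‖ ≤ (univ.filter (fun k => z k ≠ 0)).card * δ := by
  rw [← Finset.sum_filter_ne_zero]
  simp only [ne_eq, norm_eq_zero]
  rw [← nsmul_eq_mul]
  exact Finset.sum_le_card_nsmul _ _ _ fun k hk => hz k (Finset.mem_filter.mp hk).2

theorem stmt12_general (N K M : ℕ) (Δ : ℝ)
    (ρ : Fin K → ℂ)
    (hsparse : (Finset.univ.filter (fun k => ρ k ≠ 0)).card ≤ M)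
    (hρinf : ∀ k, ‖ρ k‖ ≤ 1)
    (a : Fin K → Fin N → ℂ)
    (hcoh : ∀ k l : Fin K, k ≠ l →
      ‖∑ i : Fin N, (starRingEnd ℂ) (a k i) * a l i‖ ≤ Δ / Real.sqrt N)
    (m : Fin K) (hm : ρ m = 0) :
    ‖∑ p : Fin N × Fin N,
        (starRingEnd ℂ) ((starRingEnd ℂ) (a m p.1) * a m p.2)
          * (∑ k : Fin K, ∑ l ∈ Finset.univ.filter (fun l => l ≠ k),
              (starRingEnd ℂ) (ρ k) * ρ l * ((starRingEnd ℂ) (a k p.1) * a l p.2))‖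
      ≤ Δ ^ 2 * M ^ 2 / N := by
  set z : Fin K → ℂ := fun k => ρ k * ∑ i, starRingEnd ℂ (a m i) * a k i
  have hz : ∀ k, z k ≠ 0 → ‖z k‖ ≤ Δ / Real.sqrt N := fun k hk => by
    have hρk : ρ k ≠ 0 := left_ne_zero_of_mul hk
    rw [norm_mul, ← one_mul (Δ / _)]
    exact mul_le_mul (hρinf k) (hcoh m k (by rintro rfl; exact hρk hm)) (norm_nonneg _)
      zero_le_one
  have hsupp : (univ.filter (fun k => z k ≠ 0)).card ≤ M :=
    (Finset.card_le_card (Finset.monotone_filter_right _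
      fun k _ hk => left_ne_zero_of_mul hk)).trans hsparse
  rw [sum_prod_conj_tensor_mul_sum_tensor]
  calc _ = ‖∑ k, ∑ l ∈ univ.filter (fun l => l ≠ k), starRingEnd ℂ (z k) * z l‖ := by
        simp only [z, map_mul, mul_mul_mul_comm]
    _ ≤ (∑ k, ‖z k‖) ^ 2 := norm_sum_offDiag_conj_mul_le z
    _ ≤ ((univ.filter (fun k => z k ≠ 0)).card * (Δ / Real.sqrt N)) ^ 2 :=
        pow_le_pow_left₀ (by positivity) (sum_norm_le_card_support_mul z _ hz) 2
    _ ≤ (M * (Δ / Real.sqrt N)) ^ 2 := by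
        rw [mul_pow, mul_pow]; gcongr
    _ = Δ ^ 2 * M ^ 2 / N := by
        rw [mul_pow, div_pow, Real.sq_sqrt (Nat.cast_nonneg N)]; ring

/-- Under the assumptions of the dimension-reduction setup, for any m outside the
support of ρ, with t_m = conj(a_m) ⊗ a_m, one has |⟨t_m, e⟩| ≤ Δ²M²/N. -/
theorem stmt12 (N K M : ℕ) (hN : 0 < N) (Δ : ℝ) (hΔ : 0 < Δ)
    (ρ : Fin K → ℂ)
    (hsparse : (Finset.univ.filter (fun k => ρ k ≠ 0)).card ≤ M)
    (hρinf : ∀ k, ‖ρ k‖ ≤ 1)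
    (a : Fin K → Fin N → ℂ)
    (hunit : ∀ k, ∑ i : Fin N, ‖a k i‖ ^ 2 = 1)
    (hcoh : ∀ k l : Fin K, k ≠ l →
      ‖∑ i : Fin N, (starRingEnd ℂ) (a k i) * a l i‖ ≤ Δ / Real.sqrt N)
    (m : Fin K) (hm : ρ m = 0) :
    ‖∑ p : Fin N × Fin N,
        (starRingEnd ℂ) ((starRingEnd ℂ) (a m p.1) * a m p.2)
          * (∑ k : Fin K, ∑ l ∈ Finset.univ.filter (fun l => l ≠ k),
              (starRingEnd ℂ) (ρ k) * ρ l * ((starRingEnd ℂ) (a k p.1) * a l p.2))‖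
      ≤ Δ ^ 2 * M ^ 2 / N :=
  stmt12_general N K M Δ ρ hsparse hρinf a hcoh m hm
end

section
/- Under the same assumptions, for any index m in the support of ρ, with t_m = conj(a_m)⊗a_m, one has |⟨t_m, e⟩| ≤ (2ΔM/√N + Δ²M²/N) ‖ρ‖_∞², where e = Σ_{k≠l} conj(ρ_k)ρ_l (conj(a_k)⊗a_l). -/
/-! Expanding the tensors, `⟨t_m, e⟩ = ∑_{k ≠ l} conj ρ_k ρ_l ⟨a_k, a_m⟩⟨a_m, a_l⟩`, and only pairs
in the support `T` of `ρ` contribute. Since `⟨a_m, a_m⟩ = 1`, each of the at most `2M` pairs with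
`k = m` or `l = m` contributes at most `(Δ/√N) ‖ρ‖_∞²`; each of the at most `M²` remaining pairs
contributes at most `(Δ/√N)² ‖ρ‖_∞²`. -/

open Finset ComplexConjugate Matrix

section Tensor

variable {n ι : Type*} [Fintype n] [Fintype ι]

lemma sum_conj_tensor_mul_tensor (x y u v : n → ℂ) :
    ∑ p : n × n, conj (conj (x p.1) * y p.2) * (conj (u p.1) * v p.2)
      = (star u ⬝ᵥ x) * (star y ⬝ᵥ v) := by
  rw [Fintype.sum_prod_type, dotProduct, dotProduct, sum_mul_sum]
  refine sum_congr rfl fun i _ => sum_congr rfl fun j _ => ?_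
  simp only [map_mul, Complex.conj_conj, Pi.star_apply, Complex.star_def]
  ring

lemma sum_conj_tensor_mul_sum_tensor (x y : n → ℂ) (u v : ι → n → ℂ) (s : ι → Finset ι)
    (c : ι → ι → ℂ) :
    ∑ p : n × n, conj (conj (x p.1) * y p.2)
        * ∑ k, ∑ l ∈ s k, c k l * (conj (u k p.1) * v l p.2)
      = ∑ k, ∑ l ∈ s k, c k l * ((star (u k) ⬝ᵥ x) * (star y ⬝ᵥ v l)) := by
  simp_rw [mul_sum, ← sum_conj_tensor_mul_tensor]
  rw [sum_comm]
  refine sum_congr rfl fun k _ => ?_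
  rw [sum_comm]
  refine sum_congr rfl fun l _ => ?_
  simp_rw [mul_sum, mul_left_comm]

lemma star_dotProduct_self_of_sum_norm_sq_eq_one {x : n → ℂ} (hx : ∑ i, ‖x i‖ ^ 2 = 1) :
    star x ⬝ᵥ x = 1 := by
  simp only [dotProduct, Pi.star_apply, Complex.star_def, Complex.conj_mul']
  exact_mod_cast hx

end Tensor

section OffDiag

variable {ι : Type*} [DecidableEq ι]

lemma sum_sum_ne_eq_sum_offDiag [Fintype ι] {R : Type*} [AddCommMonoid R] (f : ι → ι → R)
    (T : Finset ι) (hf : ∀ k l, f k l ≠ 0 → k ∈ T ∧ l ∈ T) :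
    ∑ k, ∑ l ∈ univ.filter (· ≠ k), f k l = ∑ p ∈ T.offDiag, f p.1 p.2 := by
  refine (sum_finset_product (univ : Finset ι).offDiag univ (fun k => univ.filter (· ≠ k))
    (by simp [eq_comm]) (f := fun p => f p.1 p.2)).symm.trans ?_
  refine (sum_subset (offDiag_mono (subset_univ T)) fun p _ hp => ?_).symm
  by_contra h
  obtain ⟨hk, hl⟩ := hf p.1 p.2 h
  exact hp (mem_offDiag.2 ⟨hk, hl, (mem_offDiag.1 ‹_›).2.2⟩)

lemma sum_offDiag_le_of_le_ite (T : Finset ι) (m : ι) {α β : ℝ} (hα : 0 ≤ α) (hβ : 0 ≤ β)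
    (w : ι × ι → ℝ) (hw : ∀ p ∈ T.offDiag, w p ≤ if p.1 = m ∨ p.2 = m then α else β) :
    ∑ p ∈ T.offDiag, w p ≤ 2 * #T * α + #T ^ 2 * β := by
  rw [← sum_filter_add_sum_filter_not T.offDiag (fun p => p.1 = m ∨ p.2 = m)]
  have hcard_m : #(T.offDiag.filter fun p => p.1 = m ∨ p.2 = m) ≤ 2 * #T := by
    calc _ ≤ #({m} ×ˢ T ∪ T ×ˢ {m}) := card_le_card fun ⟨k, l⟩ hp => by
            obtain ⟨hp, hpm⟩ := mem_filter.1 hp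
            obtain ⟨hk, hl, -⟩ := mem_offDiag.1 hp
            rcases hpm with rfl | rfl <;> simp [hk, hl]
      _ ≤ #({m} ×ˢ T) + #(T ×ˢ {m}) := card_union_le _ _
      _ = 2 * #T := by simp; ring
  have hcard_rest : #(T.offDiag.filter fun p => ¬(p.1 = m ∨ p.2 = m)) ≤ #T ^ 2 :=
    (card_filter_le _ _).trans (by rw [offDiag_card, sq]; exact Nat.sub_le _ _)
  gcongr
  · calc _ ≤ #(T.offDiag.filter fun p => p.1 = m ∨ p.2 = m) • α :=
          sum_le_card_nsmul _ _ _ fun p hp => by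
            simpa [(mem_filter.1 hp).2] using hw p (mem_filter.1 hp).1
      _ ≤ 2 * #T * α := by rw [nsmul_eq_mul]; gcongr; exact_mod_cast hcard_m
  · calc _ ≤ #(T.offDiag.filter fun p => ¬(p.1 = m ∨ p.2 = m)) • β :=
          sum_le_card_nsmul _ _ _ fun p hp => by
            simpa [(mem_filter.1 hp).2] using hw p (mem_filter.1 hp).1
      _ ≤ #T ^ 2 * β := by rw [nsmul_eq_mul]; gcongr; exact_mod_cast hcard_rest

end OffDiag

lemma norm_gram_mul_gram_le {ι n : Type*} [DecidableEq ι] [Fintype n] {a : ι → n → ℂ} {m k l : ι} {D : ℝ}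
    (hm : ∑ i, ‖a m i‖ ^ 2 = 1) (hcoh : ∀ k l, k ≠ l → ‖star (a k) ⬝ᵥ a l‖ ≤ D) (hkl : k ≠ l) :
    ‖(star (a k) ⬝ᵥ a m) * (star (a m) ⬝ᵥ a l)‖ ≤ if k = m ∨ l = m then D else D ^ 2 := by
  have hgram_m := star_dotProduct_self_of_sum_norm_sq_eq_one hm
  rcases eq_or_ne k m with rfl | hk
  · simpa [hgram_m] using hcoh k l hkl
  rcases eq_or_ne l m with rfl | hl
  · simpa [hgram_m] using hcoh k l hkl
  rw [if_neg (by tauto), norm_mul, sq]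
  exact mul_le_mul (hcoh k m hk) (hcoh m l hl.symm) (norm_nonneg _)
    ((norm_nonneg _).trans (hcoh k m hk))

theorem stmt13_general (N K M : ℕ) (hK : 0 < K) (Δ : ℝ) (hΔ : 0 < Δ)
    (ρ : Fin K → ℂ)
    (hsparse : (Finset.univ.filter (fun k => ρ k ≠ 0)).card ≤ M)
    (a : Fin K → Fin N → ℂ)
    (hunit : ∀ k, ∑ i : Fin N, ‖a k i‖ ^ 2 = 1)
    (hcoh : ∀ k l : Fin K, k ≠ l →
      ‖∑ i : Fin N, (starRingEnd ℂ) (a k i) * a l i‖ ≤ Δ / Real.sqrt N)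
    (m : Fin K) :
    haveI : Nonempty (Fin K) := Fin.pos_iff_nonempty.mp hK
    ‖∑ p : Fin N × Fin N,
        (starRingEnd ℂ) ((starRingEnd ℂ) (a m p.1) * a m p.2)
          * (∑ k : Fin K, ∑ l ∈ Finset.univ.filter (fun l => l ≠ k),
              (starRingEnd ℂ) (ρ k) * ρ l * ((starRingEnd ℂ) (a k p.1) * a l p.2))‖
      ≤ (2 * Δ * M / Real.sqrt N + Δ ^ 2 * M ^ 2 / N)
          * (⨆ k : Fin K, ‖ρ k‖) ^ 2 := by
  set S := ⨆ k : Fin K, ‖ρ k‖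
  set T := univ.filter fun k => ρ k ≠ 0
  have hS : ∀ k, ‖ρ k‖ ≤ S := le_ciSup (Set.finite_range _).bddAbove
  have hS0 : 0 ≤ S := Real.iSup_nonneg fun k => norm_nonneg _
  have hterm : ∀ p ∈ T.offDiag,
      ‖conj (ρ p.1) * ρ p.2 * ((star (a p.1) ⬝ᵥ a m) * (star (a m) ⬝ᵥ a p.2))‖
        ≤ if p.1 = m ∨ p.2 = m then S ^ 2 * (Δ / √N) else S ^ 2 * (Δ / √N) ^ 2 := by
    rintro ⟨k, l⟩ hkl
    have hgram := norm_gram_mul_gram_le (hunit m) hcoh (mem_offDiag.1 hkl).2.2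
    rw [norm_mul, norm_mul, Complex.norm_conj]
    calc _ ≤ S * S * (if k = m ∨ l = m then Δ / √N else (Δ / √N) ^ 2) :=
          mul_le_mul (mul_le_mul (hS k) (hS l) (norm_nonneg _) hS0) hgram (norm_nonneg _)
            (mul_nonneg hS0 hS0)
      _ = _ := by split_ifs <;> ring
  rw [sum_conj_tensor_mul_sum_tensor, sum_sum_ne_eq_sum_offDiag _ T fun k l h => by
    simp_all [T]]
  calc _ ≤ _ := norm_sum_le _ _
    _ ≤ 2 * #T * (S ^ 2 * (Δ / √N)) + #T ^ 2 * (S ^ 2 * (Δ / √N) ^ 2) :=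
        sum_offDiag_le_of_le_ite T m (by positivity) (by positivity) _ hterm
    _ ≤ 2 * M * (S ^ 2 * (Δ / √N)) + M ^ 2 * (S ^ 2 * (Δ / √N) ^ 2) := by
        have hT : (#T : ℝ) ≤ M := mod_cast hsparse
        gcongr
    _ = _ := by rw [div_pow, Real.sq_sqrt (Nat.cast_nonneg N)]; ring

/-- Under the same assumptions, for any m in the support of ρ, with
t_m = conj(a_m) ⊗ a_m, one has |⟨t_m, e⟩| ≤ (2ΔM/√N + Δ²M²/N)‖ρ‖_∞². -/
theorem stmt13 (N K M : ℕ) (hN : 0 < N) (hK : 0 < K) (Δ : ℝ) (hΔ : 0 < Δ)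
    (ρ : Fin K → ℂ)
    (hsparse : (Finset.univ.filter (fun k => ρ k ≠ 0)).card ≤ M)
    (hρinf : ∀ k, ‖ρ k‖ ≤ 1)
    (a : Fin K → Fin N → ℂ)
    (hunit : ∀ k, ∑ i : Fin N, ‖a k i‖ ^ 2 = 1)
    (hcoh : ∀ k l : Fin K, k ≠ l →
      ‖∑ i : Fin N, (starRingEnd ℂ) (a k i) * a l i‖ ≤ Δ / Real.sqrt N)
    (m : Fin K) (hm : ρ m ≠ 0) :
    haveI : Nonempty (Fin K) := Fin.pos_iff_nonempty.mp hK
    ‖∑ p : Fin N × Fin N,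
        (starRingEnd ℂ) ((starRingEnd ℂ) (a m p.1) * a m p.2)
          * (∑ k : Fin K, ∑ l ∈ Finset.univ.filter (fun l => l ≠ k),
              (starRingEnd ℂ) (ρ k) * ρ l * ((starRingEnd ℂ) (a k p.1) * a l p.2))‖
      ≤ (2 * Δ * M / Real.sqrt N + Δ ^ 2 * M ^ 2 / N)
          * (⨆ k : Fin K, ‖ρ k‖) ^ 2 :=
  stmt13_general N K M hK Δ hΔ ρ hsparse a hunit hcoh m
end
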